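/- arXiv:2112.10685 — 3 statements merged into one kernel-verified Lean document; each statement's English description precedes it below -/
import Mathlib

section
/- The family (C_η)_{η∈[0,1]} is a valid nested set of critical regions: if η₁ ≤ η₂ then C_{η₂} ⊆ C_{η₁}, and for every h ∈ I and every η ∈ [0,1], μ_h(C_η) ≤ 1 − η. -/
/-!
The threshold `g η` is the infimum of the admissible cut-offs `p`, those whose strict region
`{q > p}` has size at most `1 - η` under every `h`. Raising `η` shrinks the admissible set, so
`g` is monotone and the regions are nested; the only care needed is at `g η₁ = g η₂`, where the
choice between `{q ≥ g}` and `{q > g}` is monotone in `η`. For the size bound, `{q > g η}` is the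
increasing union of `{q > p}` over admissible `p` decreasing to `g η`, so continuity of measures
from below bounds it by `1 - η`; the closed region `{q ≥ g η}` is chosen only when it already
satisfies the bound.
-/

open MeasureTheory Set
open scoped ENNReal

theorem measure_setOf_lt_le_of_forall_lt {X : Type*} [MeasurableSpace X] (μ : Measure X)
    (q : X → ℝ) {a : ℝ} {c : ℝ≥0∞} (h : ∀ b, a < b → μ {x | b < q x} ≤ c) :
    μ {x | a < q x} ≤ c := by
  obtain ⟨u, hu_anti, hu_gt, hu_lim⟩ := exists_seq_strictAnti_tendsto a
  have hunion : {x | a < q x} = ⋃ n, {x | u n < q x} := by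
    ext x
    simp only [mem_ofPred_eq, mem_iUnion]
    exact ⟨fun hx => (hu_lim.eventually (gt_mem_nhds hx)).exists,
      fun ⟨n, hn⟩ => (hu_gt n).trans hn⟩
  have hmono : Monotone fun n => {x | u n < q x} :=
    fun m n hmn x hx => (hu_anti.antitone hmn).trans_lt hx
  rw [hunion, hmono.measure_iUnion]
  exact iSup_le fun n => h _ (hu_gt n)

namespace CriticalRegion

variable {X I : Type*} [MeasurableSpace X] (μ : I → Measure X) (q : X → ℝ)

/-- `f p` of the paper is `1 - supMeasure μ (B p)` and `f₁ p` is `1 - supMeasure μ (B₁ p)`. -/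
noncomputable def supMeasure (s : Set X) : ℝ := ⨆ h, (μ h s).toReal

def admissible (η : ℝ) : Set ℝ := {p | p ∈ Icc (0 : ℝ) 1 ∧ η ≤ 1 - supMeasure μ {x | p < q x}}

noncomputable def threshold (η : ℝ) : ℝ := sInf (admissible μ q η)

noncomputable def region (η : ℝ) : Set X :=
  if η ≤ 1 - supMeasure μ {x | threshold μ q η ≤ q x} then {x | threshold μ q η ≤ q x}
  else {x | threshold μ q η < q x}

variable {μ q}

theorem toReal_le_supMeasure [∀ h, IsProbabilityMeasure (μ h)] (s : Set X) (h : I) :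
    (μ h s).toReal ≤ supMeasure μ s :=
  le_ciSup (f := fun h => (μ h s).toReal) ⟨1, by rintro _ ⟨h', rfl⟩; exact measureReal_le_one⟩ h

theorem one_mem_admissible (hq1 : ∀ x, q x ≤ 1) {η : ℝ} (hη : η ≤ 1) :
    (1 : ℝ) ∈ admissible μ q η := by
  have hempty : {x | (1 : ℝ) < q x} = ∅ := eq_empty_of_forall_notMem fun x hx => (hq1 x).not_gt hx
  refine ⟨right_mem_Icc.2 zero_le_one, ?_⟩
  simpa [supMeasure, hempty] using hη

theorem threshold_mono (hq1 : ∀ x, q x ≤ 1) {η₁ η₂ : ℝ} (h12 : η₁ ≤ η₂) (hη₂ : η₂ ≤ 1) :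
    threshold μ q η₁ ≤ threshold μ q η₂ :=
  csInf_le_csInf ⟨0, fun _ hp => hp.1.1⟩ ⟨1, one_mem_admissible hq1 hη₂⟩
    fun _ hp => ⟨hp.1, h12.trans hp.2⟩

theorem measure_lt_threshold_le [∀ h, IsProbabilityMeasure (μ h)] (hq1 : ∀ x, q x ≤ 1)
    {η : ℝ} (hη : η ≤ 1) (h : I) :
    μ h {x | threshold μ q η < q x} ≤ ENNReal.ofReal (1 - η) := by
  refine measure_setOf_lt_le_of_forall_lt _ _ fun b hb => ?_
  obtain ⟨p, hp, hpb⟩ := exists_lt_of_csInf_lt ⟨1, one_mem_admissible hq1 hη⟩ hb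
  calc μ h {x | b < q x} ≤ μ h {x | p < q x} := measure_mono fun x hx => hpb.trans hx
    _ ≤ ENNReal.ofReal (1 - η) := by
      rw [← ENNReal.ofReal_toReal (measure_ne_top _ _)]
      exact ENNReal.ofReal_le_ofReal
        (by linarith [toReal_le_supMeasure (μ := μ) {x | p < q x} h, hp.2])

theorem region_antitone (hq1 : ∀ x, q x ≤ 1) {η₁ η₂ : ℝ} (h12 : η₁ ≤ η₂) (hη₂ : η₂ ≤ 1) :
    region μ q η₂ ⊆ region μ q η₁ := by
  have hopen_closed (t : ℝ) : {x | t < q x} ⊆ {x | t ≤ q x} := fun _ hx => le_of_lt (α := ℝ) hx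
  rcases (threshold_mono (μ := μ) hq1 h12 hη₂).lt_or_eq with hlt | heq
  · have h₂ : region μ q η₂ ⊆ {x | threshold μ q η₂ ≤ q x} := by
      unfold region; split_ifs
      exacts [subset_rfl, hopen_closed _]
    have h₁ : {x | threshold μ q η₁ < q x} ⊆ region μ q η₁ := by
      unfold region; split_ifs
      exacts [hopen_closed _, subset_rfl]
    have hmid : {x | threshold μ q η₂ ≤ q x} ⊆ {x | threshold μ q η₁ < q x} :=
      fun _ hx => hlt.trans_le hx
    exact h₂.trans (hmid.trans h₁)
  · unfold region
    rw [heq]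
    split_ifs with h₂ h₁ h₁
    exacts [subset_rfl, absurd (h12.trans h₂) h₁, hopen_closed _, subset_rfl]

theorem toReal_measure_region_le [∀ h, IsProbabilityMeasure (μ h)] (hq1 : ∀ x, q x ≤ 1)
    {η : ℝ} (hη : η ≤ 1) (h : I) : (μ h (region μ q η)).toReal ≤ 1 - η := by
  unfold region
  split_ifs with hclosed
  · linarith [toReal_le_supMeasure (μ := μ) {x | threshold μ q η ≤ q x} h]
  · exact ENNReal.toReal_le_of_le_ofReal (by linarith) (measure_lt_threshold_le hq1 hη h)

end CriticalRegion

open CriticalRegion in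
theorem stmt4_general {X : Type*} [MeasurableSpace X] {I : Type*}
    (μ : I → Measure X) (hμ : ∀ h, IsProbabilityMeasure (μ h))
    (q : X → ℝ) (hq1 : ∀ x, q x ≤ 1)
    (B B₁ : ℝ → Set X)
    (hB : ∀ p, B p = {x | p < q x}) (hB₁ : ∀ p, B₁ p = {x | p ≤ q x})
    (f f₁ : ℝ → ℝ)
    (hf : ∀ p, f p = 1 - ⨆ h, (μ h (B p)).toReal)
    (hf₁ : ∀ p, f₁ p = 1 - ⨆ h, (μ h (B₁ p)).toReal)
    (g : ℝ → ℝ) (hg : ∀ η, g η = sInf {p | p ∈ Set.Icc (0:ℝ) 1 ∧ η ≤ f p})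
    (C : ℝ → Set X)
    (hC : ∀ η, C η = if η ≤ f₁ (g η) then B₁ (g η) else B (g η)) :
    (∀ η₁ η₂ : ℝ, η₁ ∈ Set.Icc (0:ℝ) 1 → η₂ ∈ Set.Icc (0:ℝ) 1 → η₁ ≤ η₂ →
      C η₂ ⊆ C η₁) ∧
    (∀ h : I, ∀ η ∈ Set.Icc (0:ℝ) 1, (μ h (C η)).toReal ≤ 1 - η) := by
  have := hμ
  obtain rfl : B = fun p => {x | p < q x} := funext hB
  obtain rfl : B₁ = fun p => {x | p ≤ q x} := funext hB₁
  obtain rfl : f = fun p => 1 - supMeasure μ {x | p < q x} := funext hf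
  obtain rfl : f₁ = fun p => 1 - supMeasure μ {x | p ≤ q x} := funext hf₁
  obtain rfl : g = threshold μ q := funext hg
  obtain rfl : C = region μ q := funext hC
  exact ⟨fun η₁ η₂ _ hη₂ h12 => region_antitone hq1 h12 hη₂.2,
    fun h η hη => toReal_measure_region_le hq1 hη.2 h⟩

/-- The family `(C_η)` is a valid nested set of critical regions:
if `η₁ ≤ η₂` then `C η₂ ⊆ C η₁`, and for every `h` and `η ∈ [0,1]`,
`μ h (C η) ≤ 1 - η`. -/
theorem stmt4 {X : Type*} [MeasurableSpace X] {I : Type*} [Nonempty I]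
    (μ : I → Measure X) (hμ : ∀ h, IsProbabilityMeasure (μ h))
    (q : X → ℝ) (hq : Measurable q) (hq0 : ∀ x, 0 ≤ q x) (hq1 : ∀ x, q x ≤ 1)
    (B B₁ : ℝ → Set X)
    (hB : ∀ p, B p = {x | p < q x}) (hB₁ : ∀ p, B₁ p = {x | p ≤ q x})
    (f f₁ : ℝ → ℝ)
    (hf : ∀ p, f p = 1 - ⨆ h, (μ h (B p)).toReal)
    (hf₁ : ∀ p, f₁ p = 1 - ⨆ h, (μ h (B₁ p)).toReal)
    (g : ℝ → ℝ) (hg : ∀ η, g η = sInf {p | p ∈ Set.Icc (0:ℝ) 1 ∧ η ≤ f p})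
    (C : ℝ → Set X)
    (hC : ∀ η, C η = if η ≤ f₁ (g η) then B₁ (g η) else B (g η)) :
    (∀ η₁ η₂ : ℝ, η₁ ∈ Set.Icc (0:ℝ) 1 → η₂ ∈ Set.Icc (0:ℝ) 1 → η₁ ≤ η₂ →
      C η₂ ⊆ C η₁) ∧
    (∀ h : I, ∀ η ∈ Set.Icc (0:ℝ) 1, (μ h (C η)).toReal ≤ 1 - η) :=
  stmt4_general μ hμ q hq1 B B₁ hB hB₁ f f₁ hf hf₁ g hg C hC
end

section
/- For every η ∈ [0,1], ζ₀(η) ≤ η ≤ ζ₁(η). -/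
/-!
`f p = 1 - sup_h μ_h {q > p}` is monotone, and right-continuous because `{q > p}` is the
increasing union of the sets `{q > p + 1/(n+1)}`; hence the infimum `g η` is attained in the
sense that `η ≤ f (g η)`. Whichever of `{q ≥ g η}` and `{q > g η}` is chosen as `C η` then has
size at most `1 - η`, which is `η ≤ ζ₁ η`. For `η' < η` we have `g η' ≤ g η`. If the inequality
is strict, minimality of `g η` gives `f (g η') < η`, and `C η' ⊇ {q > g η'}`. If it is an
equality, `C η ⊊ C η'` forces `C η = {q > g η}` and `C η' = {q ≥ g η}`, and the former choice
means `f₁ (g η) < η`. So every term of the supremum defining `ζ₀ η` is below `η`.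
-/

open MeasureTheory Set Filter

section

variable {X I : Type*}

lemma iUnion_setOf_add_one_div_lt (q : X → ℝ) (p : ℝ) :
    ⋃ n : ℕ, {x | p + 1 / (n + 1) < q x} = {x | p < q x} := by
  ext x
  simp only [mem_iUnion]
  refine ⟨fun ⟨n, hn⟩ => lt_trans (lt_add_of_pos_right p Nat.one_div_pos_of_nat) hn,
    fun (hx : p < q x) => ?_⟩
  obtain ⟨n, hn⟩ := exists_nat_one_div_lt (sub_pos.2 hx)
  exact ⟨n, lt_sub_iff_add_lt'.1 hn⟩

lemma monotone_setOf_add_one_div_lt (q : X → ℝ) (p : ℝ) :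
    Monotone fun n : ℕ => {x | p + 1 / (n + 1) < q x} :=
  fun _ _ hnm => ofPred_subset_ofPred.2 fun _ =>
    lt_of_le_of_lt ((add_le_add_iff_left p).2 (Nat.one_div_le_one_div hnm))

variable [MeasurableSpace X]

noncomputable section

def testSize (μ : I → Measure X) (A : Set X) : ℝ := ⨆ h, (μ h A).toReal

def genInv (f : ℝ → ℝ) (η : ℝ) : ℝ := sInf {p | p ∈ Icc (0:ℝ) 1 ∧ η ≤ f p}

def threshold (μ : I → Measure X) (q : X → ℝ) (η : ℝ) : ℝ :=
  genInv (fun p => 1 - testSize μ {x | p < q x}) η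

def rejectionRegion (μ : I → Measure X) (q : X → ℝ) (η : ℝ) : Set X :=
  if η ≤ 1 - testSize μ {x | threshold μ q η ≤ q x} then {x | threshold μ q η ≤ q x}
  else {x | threshold μ q η < q x}

end

lemma testSize_empty (μ : I → Measure X) : testSize μ (∅ : Set X) = 0 := by
  simp [testSize]

section TestSize

variable {μ : I → Measure X} [∀ h, IsProbabilityMeasure (μ h)]

lemma bddAbove_range_toReal_measure (A : Set X) : BddAbove (range fun h => (μ h A).toReal) :=
  ⟨1, by rintro _ ⟨h, rfl⟩; exact measureReal_le_one⟩

lemma toReal_measure_le_testSize (h : I) (A : Set X) : (μ h A).toReal ≤ testSize μ A :=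
  le_ciSup (bddAbove_range_toReal_measure A) h

lemma testSize_mono {A A' : Set X} (hA : A ⊆ A') : testSize μ A ≤ testSize μ A' :=
  ciSup_mono (bddAbove_range_toReal_measure A') fun _ =>
    ENNReal.toReal_mono (measure_ne_top _ _) (measure_mono hA)

lemma testSize_iUnion_le [Nonempty I] {A : ℕ → Set X} (hA : Monotone A) {c : ℝ}
    (hc : ∀ n, testSize μ (A n) ≤ c) : testSize μ (⋃ n, A n) ≤ c :=
  ciSup_le fun h => le_of_tendsto'
    ((ENNReal.tendsto_toReal (measure_ne_top _ _)).comp (tendsto_measure_iUnion_atTop hA))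
    fun n => (toReal_measure_le_testSize h (A n)).trans (hc n)

end TestSize

section GenInv

variable {f : ℝ → ℝ} {η η' p : ℝ}

lemma bddBelow_genInv_set : BddBelow {p | p ∈ Icc (0:ℝ) 1 ∧ η ≤ f p} :=
  ⟨0, fun _ hp => hp.1.1⟩

lemma genInv_le (hp : p ∈ Icc (0:ℝ) 1) (hfp : η ≤ f p) : genInv f η ≤ p :=
  csInf_le bddBelow_genInv_set ⟨hp, hfp⟩

lemma genInv_mem_Icc (h1 : η ≤ f 1) : genInv f η ∈ Icc (0:ℝ) 1 :=
  ⟨le_csInf ⟨1, right_mem_Icc.2 zero_le_one, h1⟩ fun _ hp => hp.1.1,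
    genInv_le (right_mem_Icc.2 zero_le_one) h1⟩

lemma genInv_mono (h1 : η ≤ f 1) (hη : η' ≤ η) : genInv f η' ≤ genInv f η :=
  csInf_le_csInf bddBelow_genInv_set ⟨1, right_mem_Icc.2 zero_le_one, h1⟩
    fun _ hp => ⟨hp.1, hη.trans hp.2⟩

lemma le_of_genInv_lt (hf : Monotone f) (h1 : η ≤ f 1) (hp : genInv f η < p) : η ≤ f p := by
  obtain ⟨p', hp', hp'p⟩ :=
    exists_lt_of_csInf_lt (s := {p | p ∈ Icc (0:ℝ) 1 ∧ η ≤ f p})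
      ⟨1, right_mem_Icc.2 zero_le_one, h1⟩ hp
  exact hp'.2.trans (hf hp'p.le)

lemma apply_genInv_lt_of_genInv_lt (h1 : η' ≤ f 1) (hlt : genInv f η' < genInv f η) :
    f (genInv f η') < η :=
  lt_of_not_ge fun hle => (genInv_le (genInv_mem_Icc h1) hle).not_gt hlt

end GenInv

section Threshold

variable {μ : I → Measure X} {q : X → ℝ} {η η' : ℝ}

lemma le_one_sub_testSize_setOf_one_lt (hq1 : ∀ x, q x ≤ 1) (hη : η ≤ 1) :
    η ≤ 1 - testSize μ {x | 1 < q x} := by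
  have hempty : {x | 1 < q x} = ∅ := eq_empty_of_forall_notMem fun x hx => (hq1 x).not_gt hx
  rwa [hempty, testSize_empty, sub_zero]

lemma threshold_mono (hq1 : ∀ x, q x ≤ 1) (hη : η ≤ 1) (hη' : η' ≤ η) :
    threshold μ q η' ≤ threshold μ q η :=
  genInv_mono (le_one_sub_testSize_setOf_one_lt hq1 hη) hη'

lemma one_sub_testSize_setOf_threshold_lt_of_threshold_lt (hq1 : ∀ x, q x ≤ 1) (hη' : η' ≤ 1)
    (hlt : threshold μ q η' < threshold μ q η) :
    1 - testSize μ {x | threshold μ q η' < q x} < η :=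
  apply_genInv_lt_of_genInv_lt (le_one_sub_testSize_setOf_one_lt hq1 hη') hlt

lemma setOf_threshold_lt_subset_rejectionRegion :
    {x | threshold μ q η < q x} ⊆ rejectionRegion μ q η := by
  unfold rejectionRegion
  split_ifs
  exacts [ofPred_subset_ofPred.2 fun _ => le_of_lt, subset_rfl]

variable [∀ h, IsProbabilityMeasure (μ h)]

lemma testSize_setOf_lt_le_of_forall_lt [Nonempty I] {p₀ c : ℝ}
    (h : ∀ p, p₀ < p → testSize μ {x | p < q x} ≤ c) : testSize μ {x | p₀ < q x} ≤ c := by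
  rw [← iUnion_setOf_add_one_div_lt]
  exact testSize_iUnion_le (monotone_setOf_add_one_div_lt q p₀)
    fun _ => h _ (lt_add_of_pos_right p₀ Nat.one_div_pos_of_nat)

lemma monotone_one_sub_testSize_setOf_lt : Monotone fun p => 1 - testSize μ {x | p < q x} :=
  fun _ _ hpp' => sub_le_sub_left (testSize_mono fun _ hx => lt_of_le_of_lt hpp' hx) 1

lemma le_one_sub_testSize_setOf_threshold_lt [Nonempty I] (hq1 : ∀ x, q x ≤ 1) (hη : η ≤ 1) :
    η ≤ 1 - testSize μ {x | threshold μ q η < q x} := by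
  have hsize : testSize μ {x | threshold μ q η < q x} ≤ 1 - η :=
    testSize_setOf_lt_le_of_forall_lt fun _ hp => by
      have := le_of_genInv_lt monotone_one_sub_testSize_setOf_lt
        (le_one_sub_testSize_setOf_one_lt hq1 hη) hp
      linarith
  linarith

lemma le_one_sub_testSize_rejectionRegion [Nonempty I] (hq1 : ∀ x, q x ≤ 1) (hη : η ≤ 1) :
    η ≤ 1 - testSize μ (rejectionRegion μ q η) := by
  unfold rejectionRegion
  split_ifs with h
  exacts [h, le_one_sub_testSize_setOf_threshold_lt hq1 hη]

lemma one_sub_testSize_rejectionRegion_lt (hq1 : ∀ x, q x ≤ 1) (hη : η ≤ 1) (hη' : η' < η)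
    (hsub : rejectionRegion μ q η ⊂ rejectionRegion μ q η') :
    1 - testSize μ (rejectionRegion μ q η') < η := by
  rcases (threshold_mono hq1 hη hη'.le).lt_or_eq with hlt | heq
  · have hsize : testSize μ {x | threshold μ q η' < q x} ≤ testSize μ (rejectionRegion μ q η') :=
      testSize_mono setOf_threshold_lt_subset_rejectionRegion
    have := one_sub_testSize_setOf_threshold_lt_of_threshold_lt hq1 (hη'.le.trans hη) hlt
    linarith
  · unfold rejectionRegion at hsub ⊢
    rw [heq] at hsub ⊢
    split_ifs at hsub ⊢ with hη'C hηC hηC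
    · exact (hsub.ne rfl).elim
    · exact not_le.1 hηC
    · exact absurd (ofPred_subset_ofPred.2 fun _ => le_of_lt) hsub.not_subset
    · exact (hsub.ne rfl).elim

end Threshold

end

theorem stmt5_general {X : Type*} [MeasurableSpace X] {I : Type*} [Nonempty I]
    (μ : I → Measure X) (hμ : ∀ h, IsProbabilityMeasure (μ h))
    (q : X → ℝ) (hq1 : ∀ x, q x ≤ 1)
    (B B₁ : ℝ → Set X)
    (hB : ∀ p, B p = {x | p < q x}) (hB₁ : ∀ p, B₁ p = {x | p ≤ q x})
    (f f₁ : ℝ → ℝ)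
    (hf : ∀ p, f p = 1 - ⨆ h, (μ h (B p)).toReal)
    (hf₁ : ∀ p, f₁ p = 1 - ⨆ h, (μ h (B₁ p)).toReal)
    (g : ℝ → ℝ) (hg : ∀ η, g η = sInf {p | p ∈ Set.Icc (0:ℝ) 1 ∧ η ≤ f p})
    (C : ℝ → Set X)
    (hC : ∀ η, C η = if η ≤ f₁ (g η) then B₁ (g η) else B (g η))
    (S : ℝ → Set ℝ)
    (hS : ∀ η, S η = {η' | η' ∈ Set.Ico (0:ℝ) η ∧ C η ⊂ C η'})
    (ζ₀ ζ₁ : ℝ → ℝ)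
    (hζ₁ : ∀ η, ζ₁ η = 1 - ⨆ h, (μ h (C η)).toReal)
    (hζ₀ : ∀ η, ζ₀ η =
      sSup (insert 0 ((fun η' => 1 - ⨆ h, (μ h (C η')).toReal) '' S η))) :
    ∀ η ∈ Set.Icc (0:ℝ) 1, ζ₀ η ≤ η ∧ η ≤ ζ₁ η := by
  rintro η ⟨hη0, hη1⟩
  have := hμ
  obtain rfl : B = fun p => {x | p < q x} := funext hB
  obtain rfl : B₁ = fun p => {x | p ≤ q x} := funext hB₁
  obtain rfl : f = fun p => 1 - testSize μ {x | p < q x} := funext hf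
  obtain rfl : f₁ = fun p => 1 - testSize μ {x | p ≤ q x} := funext hf₁
  obtain rfl : g = threshold μ q := funext hg
  obtain rfl : C = rejectionRegion μ q := funext hC
  refine ⟨?_, ?_⟩
  · rw [hζ₀]
    refine Real.sSup_le ?_ hη0
    rintro _ (rfl | ⟨η', hη'S, rfl⟩)
    · exact hη0
    · rw [hS] at hη'S
      exact (one_sub_testSize_rejectionRegion_lt hq1 hη1 hη'S.1.2 hη'S.2).le
  · rw [hζ₁]
    exact le_one_sub_testSize_rejectionRegion hq1 hη1

/-- For every `η ∈ [0,1]`, `ζ₀ η ≤ η ≤ ζ₁ η`. -/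
theorem stmt5 {X : Type*} [MeasurableSpace X] {I : Type*} [Nonempty I]
    (μ : I → Measure X) (hμ : ∀ h, IsProbabilityMeasure (μ h))
    (q : X → ℝ) (hq : Measurable q) (hq0 : ∀ x, 0 ≤ q x) (hq1 : ∀ x, q x ≤ 1)
    (B B₁ : ℝ → Set X)
    (hB : ∀ p, B p = {x | p < q x}) (hB₁ : ∀ p, B₁ p = {x | p ≤ q x})
    (f f₁ : ℝ → ℝ)
    (hf : ∀ p, f p = 1 - ⨆ h, (μ h (B p)).toReal)
    (hf₁ : ∀ p, f₁ p = 1 - ⨆ h, (μ h (B₁ p)).toReal)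
    (g : ℝ → ℝ) (hg : ∀ η, g η = sInf {p | p ∈ Set.Icc (0:ℝ) 1 ∧ η ≤ f p})
    (C : ℝ → Set X)
    (hC : ∀ η, C η = if η ≤ f₁ (g η) then B₁ (g η) else B (g η))
    (S : ℝ → Set ℝ)
    (hS : ∀ η, S η = {η' | η' ∈ Set.Ico (0:ℝ) η ∧ C η ⊂ C η'})
    (ζ₀ ζ₁ : ℝ → ℝ)
    (hζ₁ : ∀ η, ζ₁ η = 1 - ⨆ h, (μ h (C η)).toReal)
    (hζ₀ : ∀ η, ζ₀ η =
      sSup (insert 0 ((fun η' => 1 - ⨆ h, (μ h (C η')).toReal) '' S η))) :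
    ∀ η ∈ Set.Icc (0:ℝ) 1, ζ₀ η ≤ η ∧ η ≤ ζ₁ η :=
  stmt5_general μ hμ q hq1 B B₁ hB hB₁ f f₁ hf hf₁ g hg C hC S hS ζ₀ ζ₁ hζ₁ hζ₀
end

section
/- (Data Processing Theorem, finite case.) Let z : X → Z with Z a finite type, and define the joint pmf r : T × Z → ℝ by r(t,ζ) = ∑_{x : z(x) = ζ} p(t,x). Then the mutual information of r is at most that of p, i.e. ∑_{(t,ζ): r(t,ζ)>0} r(t,ζ)·log(r(t,ζ)/(r_T(t)·r_Z(ζ))) ≤ ∑_{(t,x): p(t,x)>0} p(t,x)·log(p(t,x)/(p_T(t)·p_X(x))), where r_T and r_Z are the marginals of r. -/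
/-!
For every `t` and `ζ`, apply the log-sum inequality `(∑ a) log (∑ a / ∑ b) ≤ ∑ a log (a / b)`
(Jensen for `x ↦ x log x`) on the fibre `{x | z x = ζ}` to `a x = p(t,x)` and
`b x = p_T(t) p_X(x)`: then `∑ a = r(t,ζ)` and `∑ b = r_T(t) r_Z(ζ)`, since `r_T = p_T`.
Summing over `(t, ζ)` gives the inequality.
-/

/-- Mutual information of a joint pmf on a product of finite types:
`I(T;X) = ∑_{(t,x) : p(t,x) > 0} p(t,x) · log (p(t,x) / (p_T(t) · p_X(x)))`. -/
noncomputable def mutualInfo {T X : Type*} [Fintype T] [Fintype X] (p : T × X → ℝ) : ℝ :=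
  ∑ tx ∈ Finset.univ.filter (fun tx : T × X => 0 < p tx),
    p tx * Real.log (p tx / ((∑ x, p (tx.1, x)) * (∑ t, p (t, tx.2))))

open Real Finset

theorem Real.sum_mul_log_div_sum_le {ι : Type*} (s : Finset ι) {a b : ι → ℝ}
    (ha : ∀ i ∈ s, 0 ≤ a i) (hb : ∀ i ∈ s, 0 ≤ b i) (hab : ∀ i ∈ s, b i = 0 → a i = 0) :
    (∑ i ∈ s, a i) * log ((∑ i ∈ s, a i) / ∑ i ∈ s, b i) ≤ ∑ i ∈ s, a i * log (a i / b i) := by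
  have hba : ∀ i ∈ s, b i * (a i / b i) = a i := fun i hi => by
    rcases eq_or_ne (b i) 0 with h | h
    · simp [h, hab i hi h]
    · exact mul_div_cancel₀ _ h
  rcases (sum_nonneg hb).eq_or_lt with hB | hB
  · have ha0 : ∀ i ∈ s, a i = 0 :=
      fun i hi => hab i hi ((sum_eq_zero_iff_of_nonneg hb).1 hB.symm i hi)
    have hterm0 : ∀ i ∈ s, a i * log (a i / b i) = 0 := fun i hi => by simp [ha0 i hi]
    rw [sum_eq_zero ha0, sum_eq_zero hterm0, zero_mul]
  -- Jensen for `x ↦ x log x` at the points `a i / b i` with weights `b i`.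
  have jensen := convexOn_mul_log.map_centerMass_le hb hB
    (fun i hi => Set.mem_Ici.2 (div_nonneg (ha i hi) (hb i hi)))
  have hterm : ∀ i ∈ s, b i * (a i / b i) * log (a i / b i) = a i * log (a i / b i) :=
    fun i hi => by rw [hba i hi]
  simp only [centerMass, smul_eq_mul, Function.comp_apply, ← mul_assoc] at jensen
  rwa [sum_congr rfl hba, sum_congr rfl hterm, ← div_eq_inv_mul, ← div_eq_inv_mul,
    div_mul_eq_mul_div, div_le_div_iff_of_pos_right hB] at jensen

theorem mutualInfo_eq_sum {T X : Type*} [Fintype T] [Fintype X] {p : T × X → ℝ}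
    (hp : ∀ tx, 0 ≤ p tx) :
    mutualInfo p = ∑ tx, p tx * log (p tx / ((∑ x, p (tx.1, x)) * ∑ t, p (t, tx.2))) :=
  sum_filter_of_ne fun tx _ h => (hp tx).lt_of_ne' (left_ne_zero_of_mul h)

theorem mutualInfo_sum_fiberwise_le {T X Z : Type*} [Fintype T] [Fintype X] [Fintype Z]
    [DecidableEq Z] {p : T × X → ℝ} (hp : ∀ tx, 0 ≤ p tx) (z : X → Z) :
    mutualInfo (fun tζ : T × Z => ∑ x with z x = tζ.2, p (tζ.1, x)) ≤ mutualInfo p := by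
  set pT : T → ℝ := fun t => ∑ x, p (t, x)
  set pX : X → ℝ := fun x => ∑ t, p (t, x)
  have marginal_fst (t : T) : ∑ ζ, ∑ x with z x = ζ, p (t, x) = pT t :=
    sum_fiberwise _ z _
  have marginal_snd (ζ : Z) : ∑ t, ∑ x with z x = ζ, p (t, x) = ∑ x with z x = ζ, pX x :=
    sum_comm
  rw [mutualInfo_eq_sum fun _ => sum_nonneg fun _ _ => hp _, mutualInfo_eq_sum hp,
    Fintype.sum_prod_type, Fintype.sum_prod_type]
  refine sum_le_sum fun t _ => ?_
  rw [← sum_fiberwise univ z]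
  refine sum_le_sum fun ζ _ => ?_
  have hsupp (x : X) (h : pT t * pX x = 0) : p (t, x) = 0 := by
    rcases mul_eq_zero.1 h with h | h
    · exact (sum_eq_zero_iff_of_nonneg fun x _ => hp (t, x)).1 h x (mem_univ x)
    · exact (sum_eq_zero_iff_of_nonneg fun t _ => hp (t, x)).1 h t (mem_univ t)
  rw [marginal_fst, marginal_snd, mul_sum]
  exact Real.sum_mul_log_div_sum_le _ (fun _ _ => hp _)
    (fun x _ => mul_nonneg (sum_nonneg fun _ _ => hp _) (sum_nonneg fun _ _ => hp _))
    (fun x _ => hsupp x)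

theorem stmt8_general {T X Z : Type*} [Fintype T] [Fintype X] [Fintype Z] [DecidableEq Z]
    (p : T × X → ℝ) (hp0 : ∀ tx, 0 ≤ p tx)
    (z : X → Z) (r : T × Z → ℝ)
    (hr : ∀ t ζ, r (t, ζ) = ∑ x ∈ Finset.univ.filter (fun x => z x = ζ), p (t, x)) :
    mutualInfo r ≤ mutualInfo p := by
  obtain rfl : r = fun tζ => ∑ x with z x = tζ.2, p (tζ.1, x) := funext fun tζ => hr tζ.1 tζ.2
  exact mutualInfo_sum_fiberwise_le hp0 z

/-- Data Processing Theorem, finite case. If `z : X → Z` and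
`r(t,ζ) = ∑_{x : z x = ζ} p(t,x)`, then the mutual information of `r` is at most
that of `p`. -/
theorem stmt8 {T X Z : Type*} [Fintype T] [Fintype X] [Fintype Z] [DecidableEq Z]
    (p : T × X → ℝ) (hp0 : ∀ tx, 0 ≤ p tx) (hp1 : ∑ tx : T × X, p tx = 1)
    (z : X → Z) (r : T × Z → ℝ)
    (hr : ∀ t ζ, r (t, ζ) = ∑ x ∈ Finset.univ.filter (fun x => z x = ζ), p (t, x)) :
    mutualInfo r ≤ mutualInfo p :=
  stmt8_general p hp0 z r hr
end
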